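/- In the group G = ⟨a,b,c,t | ac=ca, bc=cb, act=tac, bct=tbc⟩, for every n ≥ 1, every path in the Cayley graph from aⁿb⁻ⁿ to taⁿb⁻ⁿ⁺¹ that stays inside the ball of radius 2n about the identity has length at least 4n. -/

import Mathlib

/-- The word length of `g` with respect to a generating set `S`: the least `n`
such that `g` is a product of `n` elements of `S ∪ S⁻¹`. -/
noncomputable def wordLength {G : Type*} [Group G] (S : Set G) (g : G) : ℕ :=
  sInf {n | ∃ l : List G, l.length = n ∧ (∀ x ∈ l, x ∈ S ∨ x⁻¹ ∈ S) ∧ l.prod = g}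

/-- Relators of ⟨a,b,c,t | ac=ca, bc=cb, act=tac, bct=tbc⟩, with
a = 0, b = 1, c = 2, t = 3. -/
def grels : Set (FreeGroup (Fin 4)) :=
  { FreeGroup.of 0 * FreeGroup.of 2 * (FreeGroup.of 2 * FreeGroup.of 0)⁻¹,
    FreeGroup.of 1 * FreeGroup.of 2 * (FreeGroup.of 2 * FreeGroup.of 1)⁻¹,
    FreeGroup.of 0 * FreeGroup.of 2 * FreeGroup.of 3 *
      (FreeGroup.of 3 * FreeGroup.of 0 * FreeGroup.of 2)⁻¹,
    FreeGroup.of 1 * FreeGroup.of 2 * FreeGroup.of 3 *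
      (FreeGroup.of 3 * FreeGroup.of 1 * FreeGroup.of 2)⁻¹ }

/-- The group G = ⟨a,b,c,t | ac=ca, bc=cb, act=tac, bct=tbc⟩ ≅ F₂ × F₂. -/
abbrev G : Type := PresentedGroup grels

/-- The generator a of G. -/
def ga : G := PresentedGroup.of 0
/-- The generator b of G. -/
def gb : G := PresentedGroup.of 1
/-- The generator c of G. -/
def gc : G := PresentedGroup.of 2
/-- The generator t of G. -/
def gt : G := PresentedGroup.of 3

/-- The generating set S₂ = {a, b, c, t} of G. -/
def SG : Set G := {ga, gb, gc, gt}

/-- `steps` is a sequence of generator steps tracing a path in the Cayley graph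
of `(G,S)` from `u` to `v` all of whose vertices lie in the set `B`. -/
def IsPathIn {G : Type*} [Group G] (S : Set G) (B : Set G) (u v : G)
    (steps : List G) : Prop :=
  (∀ x ∈ steps, x ∈ S ∨ x⁻¹ ∈ S) ∧ u * steps.prod = v ∧
    ∀ l, l <+: steps → u * l.prod ∈ B

/-!
Two projections of `G` bound lengths from below: `toFreeAB : G → F(x, y)` (`a ↦ x`, `b ↦ y`,
`c, t ↦ 1`) and the exponent sum `cExp` of `c`; `‖toFreeAB g‖ + |cExp g|` is subadditive and at
most `1` on generators.

In the lamplighter group `ℤ ≀ ℤ`, let `a`, `b` step left, `c` step right and `t` toggle the lamp at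
the current position. The endpoints differ in the lamp at the origin, so the path takes a step
`t^{±1}` at a vertex `g` at the origin, where `cExp g` equals the exponent sum `e(P)` of
`P = toFreeAB g`. One of `g`, `g t^{±1}` lights the origin and has length at most `2n`; each of
its shortest words also takes such a step, which does not move the projections, so
`‖P‖ + |e(P)| < 2n`. Then the reduced word of `P` has fewer than `n` positive letters and cannot
cancel the `x⁻ⁿ` separating it from the `y`-letters of `(xⁿy⁻ⁿ)⁻¹` and `(xⁿy⁻⁽ⁿ⁻¹⁾)⁻¹`, so the two
halves of the path have lengths at least `2n` and `2n - 1`.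
-/

open Multiplicative

theorem List.exists_split_of_apply_mul_prod_ne {M β : Type*} [Monoid M] (f : M → β) :
    ∀ (l : List M) (u : M), f (u * l.prod) ≠ f u →
      ∃ l₁ s l₂, l = l₁ ++ s :: l₂ ∧ f (u * l₁.prod * s) ≠ f (u * l₁.prod)
  | [], u, h => absurd (by rw [prod_nil, mul_one]) h
  | s :: l, u, h => by
    by_cases hs : f (u * s) = f u
    · obtain ⟨l₁, s', l₂, rfl, h'⟩ :=
        exists_split_of_apply_mul_prod_ne f l (u * s) (by rwa [mul_assoc, ← prod_cons, hs])
      exact ⟨s :: l₁, s', l₂, rfl, by rwa [prod_cons, ← mul_assoc]⟩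
    · exact ⟨[], s, l, rfl, by simpa using hs⟩

theorem List.apply_prod_le_length {M : Type*} [Monoid M] {f : M → ℤ} (h1 : f 1 ≤ 0)
    (hmul : ∀ a b, f (a * b) ≤ f a + f b) :
    ∀ {l : List M}, (∀ x ∈ l, f x ≤ 1) → f l.prod ≤ l.length
  | [], _ => by simpa using h1
  | x :: l, hl => by
    have := apply_prod_le_length h1 hmul fun y hy => hl y (mem_cons_of_mem x hy)
    rw [prod_cons, length_cons, Nat.cast_succ]
    linarith [hmul x l.prod, hl x mem_cons_self]

lemma exists_list_of_wordLength_le {G : Type*} [Group G] {S : Set G}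
    (hS : Subgroup.closure S = ⊤) {g : G} {k : ℕ} (h : wordLength S g ≤ k) :
    ∃ l : List G, (∀ x ∈ l, x ∈ S ∨ x⁻¹ ∈ S) ∧ l.prod = g ∧ l.length ≤ k := by
  have hg : g ∈ Submonoid.closure (S ∪ S⁻¹) := by
    rw [← Subgroup.closure_toSubmonoid, hS]; trivial
  obtain ⟨l, hl, hlg⟩ := Submonoid.exists_list_of_mem_closure hg
  obtain ⟨l', hlen, hl', hprod⟩ := Nat.sInf_mem (s := {n | ∃ l : List G, l.length = n ∧
    (∀ x ∈ l, x ∈ S ∨ x⁻¹ ∈ S) ∧ l.prod = g}) ⟨l.length, l, rfl, hl, hlg⟩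
  exact ⟨l', hl', hprod, hlen ▸ h⟩

namespace FreeGroup

variable {α : Type*}

def expSum : FreeGroup α →* Multiplicative ℤ := FreeGroup.lift fun _ => ofAdd 1

@[simp] lemma expSum_of (a : α) : expSum (of a) = ofAdd 1 := lift_apply_of

def posLen [DecidableEq α] (g : FreeGroup α) : ℕ := g.toWord.countP (·.2)

lemma toAdd_expSum_mk (L : List (α × Bool)) :
    toAdd (expSum (mk L)) = 2 * (L.countP (·.2) : ℤ) - L.length := by
  induction L with
  | nil => simp [← one_eq_mk]
  | cons p L ih =>
    rw [← List.singleton_append, ← mul_mk, _root_.map_mul, toAdd_mul, ih]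
    obtain ⟨a, _ | _⟩ := p <;> simp [expSum, lift_mk] <;> ring

variable [DecidableEq α]

lemma two_mul_posLen (g : FreeGroup α) : 2 * (posLen g : ℤ) = g.norm + toAdd (expSum g) := by
  have h := toAdd_expSum_mk g.toWord
  rw [mk_toWord] at h
  rw [h, posLen, norm]
  ring

lemma toWord_eq_replicate_append (g : FreeGroup α) (x : α) :
    ∃ k R, g.toWord = List.replicate k (x, true) ++ R ∧ ∀ b ∈ R.head?, b ≠ (x, true) := by
  refine ⟨(g.toWord.takeWhile (· = (x, true))).length, g.toWord.dropWhile (· = (x, true)), ?_, ?_⟩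
  · conv_lhs => rw [← List.takeWhile_append_dropWhile (p := (· = (x, true))) (l := g.toWord)]
    congr 1
    exact List.eq_replicate_iff.2 ⟨rfl, fun b hb => by simpa using List.mem_takeWhile_imp hb⟩
  · intro b hb
    have h := List.head?_dropWhile_not (· = (x, true)) g.toWord
    rw [hb] at h
    simpa using h

lemma mk_replicate_true (x : α) (k : ℕ) : mk (List.replicate k (x, true)) = of x ^ k := by
  rw [← toWord_of_pow, mk_toWord]

lemma mk_replicate_false (x : α) (k : ℕ) : mk (List.replicate k (x, false)) = (of x ^ k)⁻¹ := by
  rw [← mk_replicate_true, inv_mk]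
  simp [invRev]

lemma le_posLen_of_posLen_lt {x y : α} (hxy : x ≠ y) {m n : ℕ} {P : FreeGroup α}
    (hP : posLen P < n) : m ≤ posLen (of y ^ m * (of x ^ n)⁻¹ * P) := by
  obtain ⟨k, R, hPw, hR⟩ := toWord_eq_replicate_append P x
  have hk : k < n := by
    refine lt_of_le_of_lt ?_ hP
    simp [posLen, hPw, List.countP_replicate]
  obtain ⟨j, rfl⟩ := Nat.exists_eq_add_of_lt hk
  have hmk : of y ^ m * (of x ^ (k + j + 1))⁻¹ * P =
      mk (List.replicate m (y, true) ++ (List.replicate (j + 1) (x, false) ++ R)) := by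
    rw [← mul_mk, ← mul_mk, mk_replicate_true, mk_replicate_false, ← mk_toWord (x := P), hPw,
      ← mul_mk, mk_replicate_true, pow_add _ (k + j), pow_add]
    group
  have hRred : IsReduced R :=
    (isReduced_toWord (x := P)).infix ⟨List.replicate k (x, true), [], by simp [hPw]⟩
  have hred : IsReduced (List.replicate m (y, true) ++ (List.replicate (j + 1) (x, false) ++ R)) := by
    refine (List.isChain_replicate_of_rel _ (by simp)).append
      ((List.isChain_replicate_of_rel _ (by simp)).append hRred ?_) ?_
    · intro a ha b hb hab
      rw [List.getLast?_replicate, if_neg j.succ_ne_zero, Option.mem_some_iff] at ha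
      subst ha
      obtain ⟨_, _ | _⟩ := b
      · rfl
      · exact absurd (by simp_all) (hR _ hb)
    · intro a ha b hb hab
      rw [List.getLast?_replicate, Option.mem_ite_none_left] at ha
      rw [List.head?_append, List.head?_replicate, if_neg j.succ_ne_zero] at hb
      simp only [Option.some_or, Option.mem_some_iff] at ha hb
      subst hb
      rw [← ha.2] at hab
      exact absurd hab hxy.symm
  rw [hmk, posLen, toWord_mk, hred.reduce_eq, List.countP_append, List.countP_replicate]
  simp

lemma add_le_norm_inv_mul_add_expSum {x y : α} (hxy : x ≠ y) {m n : ℕ} {P : FreeGroup α}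
    (hP : posLen P < n) :
    (n + m : ℤ) ≤ ((of x ^ n * (of y ^ m)⁻¹)⁻¹ * P).norm + toAdd (expSum P) := by
  have hpos := two_mul_posLen (of y ^ m * (of x ^ n)⁻¹ * P)
  simp only [_root_.map_mul, _root_.map_inv, map_pow, expSum_of, toAdd_mul, toAdd_inv, toAdd_pow,
    toAdd_ofAdd, nsmul_one] at hpos
  have := le_posLen_of_posLen_lt (m := m) hxy hP
  rw [mul_inv_rev, inv_inv]
  omega

end FreeGroup

namespace G

open FreeGroup

section Lift

variable {H : Type*} [Group H]

def lift (a b c t : H) (hac : Commute a c) (hbc : Commute b c) (hact : Commute (a * c) t)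
    (hbct : Commute (b * c) t) : G →* H :=
  PresentedGroup.toGroup (f := ![a, b, c, t]) <| by
    intro r hr
    simp only [grels, Set.mem_insert_iff, Set.mem_singleton_iff] at hr
    rcases hr with rfl | rfl | rfl | rfl <;>
      simp only [_root_.map_mul, _root_.map_inv, lift_apply_of, mul_inv_eq_one] <;>
      simp only [Matrix.cons_val, mul_assoc]
    exacts [hac.eq, hbc.eq, by rw [← mul_assoc, hact.eq], by rw [← mul_assoc, hbct.eq]]

variable (a b c t : H) (hac : Commute a c) (hbc : Commute b c) (hact : Commute (a * c) t)
  (hbct : Commute (b * c) t)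

@[simp] lemma lift_ga : lift a b c t hac hbc hact hbct ga = a := PresentedGroup.toGroup.of _
@[simp] lemma lift_gb : lift a b c t hac hbc hact hbct gb = b := PresentedGroup.toGroup.of _
@[simp] lemma lift_gc : lift a b c t hac hbc hact hbct gc = c := PresentedGroup.toGroup.of _
@[simp] lemma lift_gt : lift a b c t hac hbc hact hbct gt = t := PresentedGroup.toGroup.of _

end Lift

def toFreeAB : G →* FreeGroup Bool :=
  lift (of false) (of true) 1 1 (.one_right _) (.one_right _) (.one_right _) (.one_right _)

def cExp : G →* Multiplicative ℤ :=
  lift 1 1 (ofAdd 1) 1 (.all _ _) (.all _ _) (.all _ _) (.all _ _)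

abbrev Lamplighter := Multiplicative ℤ ≀ᵣ Multiplicative ℤ

lemma inl_neg_one_mul_inl_one :
    (RegularWreathProduct.inl (ofAdd (-1)) * RegularWreathProduct.inl (ofAdd 1) : Lamplighter) =
      1 := by
  rw [← _root_.map_mul, ← ofAdd_add]; simp

def toWreath : G →* Lamplighter :=
  lift (RegularWreathProduct.inl (ofAdd (-1))) (RegularWreathProduct.inl (ofAdd (-1)))
    (RegularWreathProduct.inl (ofAdd 1)) ⟨Pi.mulSingle 1 (ofAdd 1), 1⟩
    ((Commute.all _ _).map _) ((Commute.all _ _).map _)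
    (by rw [inl_neg_one_mul_inl_one]; exact .one_left _)
    (by rw [inl_neg_one_mul_inl_one]; exact .one_left _)

def lamp (g : G) : Multiplicative ℤ := (toWreath g).left 1

lemma toWreath_right (g : G) : (toWreath g).right = cExp g / expSum (toFreeAB g) := by
  suffices RegularWreathProduct.rightHom.comp toWreath = cExp / expSum.comp toFreeAB from
    DFunLike.congr_fun this g
  ext i
  fin_cases i <;> simp [toWreath, cExp, toFreeAB] <;> rfl

lemma lamp_mul (g h : G) : lamp (g * h) = lamp g * (toWreath h).left (toWreath g).right⁻¹ := by
  simp [lamp, RegularWreathProduct.mul_left]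

lemma cExp_eq_expSum_of_lamp_mul_ne {g s : G} (hs : s ∈ SG ∨ s⁻¹ ∈ SG)
    (h : lamp (g * s) ≠ lamp g) :
    cExp g = expSum (toFreeAB g) ∧ toFreeAB s = 1 ∧ cExp s = 1 := by
  rw [← div_eq_one, ← toWreath_right]
  rw [lamp_mul] at h
  generalize (toWreath g).right = r at h ⊢
  simp only [SG, Set.mem_insert_iff, Set.mem_singleton_iff, inv_eq_iff_eq_inv] at hs
  rcases hs with (rfl | rfl | rfl | rfl) | (rfl | rfl | rfl | rfl) <;>
    simp_all [toWreath, toFreeAB, cExp, Pi.mulSingle_apply]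

lemma exists_crossing {u : G} {l : List G} (hl : ∀ s ∈ l, s ∈ SG ∨ s⁻¹ ∈ SG)
    (h : lamp (u * l.prod) ≠ lamp u) :
    ∃ l₁ s l₂, l = l₁ ++ s :: l₂ ∧ lamp (u * l₁.prod * s) ≠ lamp (u * l₁.prod) ∧
      cExp (u * l₁.prod) = expSum (toFreeAB (u * l₁.prod)) ∧ toFreeAB s = 1 ∧ cExp s = 1 := by
  obtain ⟨l₁, s, l₂, rfl, hs⟩ := List.exists_split_of_apply_mul_prod_ne lamp l u h
  exact ⟨l₁, s, l₂, rfl, hs, cExp_eq_expSum_of_lamp_mul_ne (hl s (by simp)) hs⟩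

lemma closure_SG : Subgroup.closure SG = ⊤ := by
  refine eq_top_iff.2 ((PresentedGroup.closure_range_of grels).ge.trans (Subgroup.closure_mono ?_))
  rintro _ ⟨i, rfl⟩
  fin_cases i <;> simp [SG, ga, gb, gc, gt]

def imageNorm (g : G) : ℤ := (toFreeAB g).norm + |toAdd (cExp g)|

lemma imageNorm_mul_le (g h : G) : imageNorm (g * h) ≤ imageNorm g + imageNorm h := by
  have := norm_mul_le (toFreeAB g) (toFreeAB h)
  have := abs_add_le (toAdd (cExp g)) (toAdd (cExp h))
  simp only [imageNorm, _root_.map_mul, toAdd_mul]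
  linarith

lemma imageNorm_inv (g : G) : imageNorm g⁻¹ = imageNorm g := by
  simp [imageNorm]

lemma imageNorm_inv_mul (x y : G) :
    imageNorm (x⁻¹ * y) =
      ((toFreeAB x)⁻¹ * toFreeAB y).norm + |toAdd (cExp y) - toAdd (cExp x)| := by
  simp [imageNorm, add_comm, ← sub_eq_add_neg]

lemma imageNorm_le_one {s : G} (hs : s ∈ SG ∨ s⁻¹ ∈ SG) : imageNorm s ≤ 1 := by
  simp only [SG, Set.mem_insert_iff, Set.mem_singleton_iff, inv_eq_iff_eq_inv] at hs
  rcases hs with (rfl | rfl | rfl | rfl) | (rfl | rfl | rfl | rfl) <;>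
    simp [imageNorm, toFreeAB, cExp]

lemma imageNorm_prod_le_length {l : List G} (hl : ∀ s ∈ l, s ∈ SG ∨ s⁻¹ ∈ SG) :
    imageNorm l.prod ≤ l.length :=
  List.apply_prod_le_length (by simp [imageNorm]) imageNorm_mul_le
    fun s hs => imageNorm_le_one (hl s hs)

lemma imageNorm_lt_of_lamp_ne_one {g : G} {k : ℕ} (hg : wordLength SG g ≤ k)
    (hlamp : lamp g ≠ 1) : imageNorm g < k := by
  obtain ⟨l, hl, rfl, hlen⟩ := exists_list_of_wordLength_le closure_SG hg
  obtain ⟨l₁, s, l₂, rfl, -, -, hs, hc⟩ :=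
    exists_crossing (u := 1) hl (by simpa [lamp] using hlamp)
  have h₁ := imageNorm_prod_le_length (l := l₁) fun x hx => hl x (by simp [hx])
  have h₂ := imageNorm_prod_le_length (l := l₂) fun x hx => hl x (by simp [hx])
  have hs0 : imageNorm s = 0 := by simp [imageNorm, hs, hc]
  have := imageNorm_mul_le (l₁.prod * s) l₂.prod
  have := imageNorm_mul_le l₁.prod s
  simp only [List.prod_append, List.prod_cons, List.length_append, List.length_cons] at hlen ⊢
  rw [← mul_assoc]
  omega

lemma posLen_lt_of_crossing {g s : G} {n : ℕ} (hg : wordLength SG g ≤ 2 * n)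
    (hgs : wordLength SG (g * s) ≤ 2 * n) (hlamp : lamp (g * s) ≠ lamp g)
    (hcg : cExp g = expSum (toFreeAB g)) (hs : toFreeAB s = 1) (hc : cExp s = 1) :
    posLen (toFreeAB g) < n := by
  have hnorm : imageNorm g < 2 * n := by
    by_cases h : lamp g = 1
    · simpa [imageNorm, hs, hc] using imageNorm_lt_of_lamp_ne_one hgs (h ▸ hlamp)
    · exact imageNorm_lt_of_lamp_ne_one hg h
  have := two_mul_posLen (toFreeAB g)
  have := le_abs_self (toAdd (expSum (toFreeAB g)))
  rw [imageNorm, hcg] at hnorm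
  omega

section Endpoints

variable (i j : ℕ)

lemma toFreeAB_ga_pow_mul_gb_zpow :
    toFreeAB (ga ^ i * gb ^ (-j : ℤ)) = of false ^ i * (of true ^ j)⁻¹ := by
  simp [toFreeAB]

lemma cExp_ga_pow_mul_gb_zpow : cExp (ga ^ i * gb ^ (-j : ℤ)) = 1 := by
  simp [cExp]

lemma toFreeAB_gt_mul (g : G) : toFreeAB (gt * g) = toFreeAB g := by
  simp [toFreeAB]

lemma cExp_gt_mul (g : G) : cExp (gt * g) = cExp g := by
  simp [cExp]

lemma toWreath_ga_pow_mul_gb_zpow :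
    toWreath (ga ^ i * gb ^ (-j : ℤ)) = RegularWreathProduct.inl (ofAdd (j - i : ℤ)) := by
  rw [_root_.map_mul, map_pow, map_zpow]
  simp only [toWreath, lift_ga, lift_gb, ← map_pow, ← map_zpow, ← _root_.map_mul]
  congr 1
  apply toAdd.injective
  simp only [toAdd_mul, toAdd_pow, toAdd_zpow, toAdd_ofAdd, nsmul_eq_mul, smul_eq_mul]
  ring

lemma lamp_ga_pow_mul_gb_zpow : lamp (ga ^ i * gb ^ (-j : ℤ)) = 1 := by
  rw [lamp, toWreath_ga_pow_mul_gb_zpow]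
  rfl

lemma lamp_gt_mul_ga_pow_mul_gb_zpow : lamp (gt * (ga ^ i * gb ^ (-j : ℤ))) = ofAdd 1 := by
  rw [lamp_mul, toWreath_ga_pow_mul_gb_zpow, RegularWreathProduct.left_inl]
  simp [lamp, toWreath]

end Endpoints

end G

open G FreeGroup in
/-- In G, for every n ≥ 1, every path in the Cayley graph from aⁿb⁻ⁿ to
taⁿb⁻ⁿ⁺¹ staying inside the ball of radius 2n has length at least 4n. -/
theorem stmt10 (n : ℕ) (hn : 1 ≤ n) (steps : List G)
    (hp : IsPathIn SG {g | wordLength SG g ≤ 2 * n}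
      (ga ^ n * gb ^ (-(n : ℤ))) (gt * ga ^ n * gb ^ (1 - (n : ℤ))) steps) :
    4 * n ≤ steps.length := by
  obtain ⟨hsteps, hend, hball⟩ := hp
  rw [show (1 - n : ℤ) = -(n - 1 : ℕ) by omega, mul_assoc gt] at hend
  set u := ga ^ n * gb ^ (-(n : ℤ))
  set v := gt * (ga ^ n * gb ^ (-(n - 1 : ℕ) : ℤ))
  obtain ⟨l₁, s, l₂, rfl, hlamp, hcg, hs, hc⟩ := exists_crossing hsteps (by
    rw [hend, lamp_gt_mul_ga_pow_mul_gb_zpow, lamp_ga_pow_mul_gb_zpow]; decide)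
  set g := u * l₁.prod with hg
  have hP : posLen (toFreeAB g) < n := posLen_lt_of_crossing (hball l₁ (List.prefix_append _ _))
    (by simpa [g, mul_assoc] using hball (l₁ ++ [s]) ⟨l₂, by simp⟩) hlamp hcg hs hc
  have h₁ : imageNorm (u⁻¹ * g) ≤ l₁.length := by
    simpa [hg] using imageNorm_prod_le_length (l := l₁) fun x hx => hsteps x (by simp [hx])
  have h₂ : imageNorm (v⁻¹ * (g * s)) ≤ l₂.length := by
    have hl₂ : l₂.prod = (g * s)⁻¹ * v := by
      rw [← hend, List.prod_append, List.prod_cons, hg]; group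
    rw [← imageNorm_inv, mul_inv_rev, inv_inv, ← hl₂]
    exact imageNorm_prod_le_length fun x hx => hsteps x (by simp [hx])
  rw [imageNorm_inv_mul, toFreeAB_ga_pow_mul_gb_zpow, cExp_ga_pow_mul_gb_zpow, hcg] at h₁
  rw [imageNorm_inv_mul, toFreeAB_gt_mul, toFreeAB_ga_pow_mul_gb_zpow, cExp_gt_mul,
    cExp_ga_pow_mul_gb_zpow, map_mul toFreeAB g, map_mul cExp g, hs, hc, mul_one, mul_one, hcg] at h₂
  have hU := add_le_norm_inv_mul_add_expSum Bool.false_ne_true (m := n) hP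
  have hV := add_le_norm_inv_mul_add_expSum Bool.false_ne_true (m := n - 1) hP
  have := le_abs_self (toAdd (expSum (toFreeAB g)))
  simp only [toAdd_one, sub_zero] at h₁ h₂
  rw [List.length_append, List.length_cons]
  omega
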